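/- arXiv:2410.01277 — 2 statements merged into one kernel-verified Lean document; each statement's English description precedes it below -/
import Mathlib

section
/- Let γ : ℝ → ℝ be a locally Lipschitz class K function, let c : ℝ → ℝ be continuous with c(t) > 0 for all t, and let h : ℝ → ℝ be differentiable with h'(t) ≥ −c(t)·γ(h(t)) for all t ≥ 0. If h(0) ≥ 0, then h(t) ≥ 0 for all t ≥ 0. -/
/-!
If `h` ever became negative on `[0, t]`, let `s` be the last time in `[0, t]` with `h s ≥ 0`.
On `(s, t]` we have `h < 0`, hence `γ ∘ h < 0` and `h' ≥ -c·γ(h) > 0`, so `h` is strictly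
increasing on `[s, t]` and `h t > h s ≥ 0`, a contradiction.
-/

open Set

theorem ContinuousOn.exists_last_nonneg {f : ℝ → ℝ} {a t : ℝ} (hf : ContinuousOn f (Icc a t))
    (hat : a ≤ t) (ha : 0 ≤ f a) (ht : f t < 0) :
    ∃ s ∈ Ico a t, 0 ≤ f s ∧ ∀ u ∈ Ioc s t, f u < 0 := by
  have hK : IsCompact (Icc a t ∩ f ⁻¹' Ici 0) :=
    isCompact_Icc.of_isClosed_subset
      (hf.preimage_isClosed_of_isClosed isClosed_Icc isClosed_Ici) inter_subset_left
  obtain ⟨s, ⟨⟨has, hst⟩, hs⟩, hmax⟩ := hK.exists_isGreatest ⟨a, ⟨left_mem_Icc.2 hat, ha⟩⟩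
  have hst' : s < t := hst.lt_of_ne fun hst => (hst ▸ hs : 0 ≤ f t).not_gt ht
  refine ⟨s, ⟨has, hst'⟩, hs, fun u ⟨hsu, hut⟩ => ?_⟩
  by_contra! hu
  exact (hmax ⟨⟨has.trans hsu.le, hut⟩, hu⟩).not_gt hsu

theorem nonneg_of_deriv_pos_of_neg {f : ℝ → ℝ} {a : ℝ} (hf : ContinuousOn f (Ici a))
    (ha : 0 ≤ f a) (hderiv : ∀ x, a < x → f x < 0 → 0 < deriv f x) :
    ∀ x, a ≤ x → 0 ≤ f x := by
  intro t hat
  by_contra! ht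
  obtain ⟨s, ⟨has, hst⟩, hs, hneg⟩ :=
    (hf.mono Icc_subset_Ici_self).exists_last_nonneg hat ha ht
  have hmono : StrictMonoOn f (Icc s t) := by
    refine strictMonoOn_of_deriv_pos (convex_Icc s t)
      (hf.mono fun u hu => has.trans hu.1) fun u hu => ?_
    rw [interior_Icc] at hu
    exact hderiv u (has.trans_lt hu.1) (hneg u ⟨hu.1, hu.2.le⟩)
  linarith [hmono (left_mem_Icc.2 hst.le) (right_mem_Icc.2 hst.le) hst]

theorem stmt_3_general (γ : ℝ → ℝ)
    (hγmono : StrictMono γ) (hγ0 : γ 0 = 0)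
    (c : ℝ → ℝ) (hcpos : ∀ t : ℝ, 0 < c t)
    (h : ℝ → ℝ) (hh : Differentiable ℝ h)
    (hineq : ∀ t : ℝ, 0 ≤ t → deriv h t ≥ -(c t * γ (h t)))
    (h0 : 0 ≤ h 0) :
    ∀ t : ℝ, 0 ≤ t → 0 ≤ h t := by
  refine nonneg_of_deriv_pos_of_neg hh.continuous.continuousOn h0 fun x hx hhx => ?_
  have hγx : γ (h x) < 0 := hγ0 ▸ hγmono hhx
  exact (neg_pos.2 (mul_neg_of_pos_of_neg (hcpos x) hγx)).trans_le (hineq x hx.le)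

/-- Comparison-lemma argument used in Theorems 2 and 3 of the paper: if `γ` is a
locally Lipschitz class K function, `c` is continuous and positive, and
`h' ≥ -c(t)·γ(h(t))` for `t ≥ 0` with `h(0) ≥ 0`, then `h(t) ≥ 0` for all `t ≥ 0`. -/
theorem stmt_3 (γ : ℝ → ℝ)
    (hγmono : StrictMono γ) (hγ0 : γ 0 = 0) (hγlip : LocallyLipschitz γ)
    (c : ℝ → ℝ) (hc : Continuous c) (hcpos : ∀ t : ℝ, 0 < c t)
    (h : ℝ → ℝ) (hh : Differentiable ℝ h)
    (hineq : ∀ t : ℝ, 0 ≤ t → deriv h t ≥ -(c t * γ (h t)))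
    (h0 : 0 ≤ h 0) :
    ∀ t : ℝ, 0 ≤ t → 0 ≤ h t :=
  stmt_3_general γ hγmono hγ0 c hcpos h hh hineq h0
end

section
/- Let q, e_c, v, ω ∈ ℝ³, let p : ℝ → ℝ³ have derivative v at t₀, and let R : ℝ → ℝ³ˣ³ have derivative R(t₀)·ω̂ at t₀, where ω̂ is the skew-symmetric matrix with ω̂ x = ω × x. Suppose q ≠ p(t₀), and set d = ‖q − p(t₀)‖ and β = (q − p(t₀))/d. Then the function t ↦ ⟨(q − p(t))/‖q − p(t)‖, R(t)·e_c⟩ is differentiable at t₀ with derivative −(1/d)·⟨(I − ββᵀ)·R(t₀)·e_c, v⟩ + ⟨β, R(t₀)·(ω × e_c)⟩. -/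
open scoped RealInnerProductSpace

attribute [local instance] Matrix.normedAddCommGroup Matrix.normedSpace

/-- The hat map, sending `ω ∈ ℝ³` to the skew-symmetric matrix `ω̂` satisfying
`ω̂ x = ω × x` for all `x ∈ ℝ³`. -/
noncomputable def hatMap (ω : EuclideanSpace ℝ (Fin 3)) : Matrix (Fin 3) (Fin 3) ℝ :=
  !![0, -ω 2, ω 1; ω 2, 0, -ω 0; -ω 1, ω 0, 0]

/-- Multiplication of a matrix with a vector of `EuclideanSpace ℝ (Fin 3)`. -/
noncomputable def mulE (M : Matrix (Fin 3) (Fin 3) ℝ) (x : EuclideanSpace ℝ (Fin 3)) :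
    EuclideanSpace ℝ (Fin 3) :=
  (WithLp.equiv 2 (Fin 3 → ℝ)).symm (M.mulVec ((WithLp.equiv 2 (Fin 3 → ℝ)) x))

/-- The cross product on `ℝ³`. -/
noncomputable def crossE (ω x : EuclideanSpace ℝ (Fin 3)) : EuclideanSpace ℝ (Fin 3) :=
  (WithLp.equiv 2 (Fin 3 → ℝ)).symm
    (crossProduct ((WithLp.equiv 2 (Fin 3 → ℝ)) ω) ((WithLp.equiv 2 (Fin 3 → ℝ)) x))

lemma hat_mulVec (w x : Fin 3 → ℝ) :
    (!![0, -w 2, w 1; w 2, 0, -w 0; -w 1, w 0, 0]).mulVec x = crossProduct w x := by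
  ext i
  fin_cases i <;>
    simp [Matrix.mulVec, crossProduct, Matrix.vecHead, Matrix.vecTail, Fin.sum_univ_three] <;> ring

lemma mulE_hat (ω x : EuclideanSpace ℝ (Fin 3)) : mulE (hatMap ω) x = crossE ω x :=
  congrArg _ (hat_mulVec ((WithLp.equiv 2 (Fin 3 → ℝ)) ω) ((WithLp.equiv 2 (Fin 3 → ℝ)) x))

lemma mulE_mul (A B : Matrix (Fin 3) (Fin 3) ℝ) (x : EuclideanSpace ℝ (Fin 3)) :
    mulE (A * B) x = mulE A (mulE B x) := by
  simp [mulE, Matrix.mulVec_mulVec]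

noncomputable def mulEL (x : EuclideanSpace ℝ (Fin 3)) :
    Matrix (Fin 3) (Fin 3) ℝ →ₗ[ℝ] EuclideanSpace ℝ (Fin 3) where
  toFun M := mulE M x
  map_add' M N := by ext i; simp [mulE, Matrix.add_mulVec]
  map_smul' c M := by ext i; simp [mulE, Matrix.smul_mulVec]

/-- First-derivative formula for the candidate control barrier function
`h = βᵀ R e_c - cos ψ_F` (Appendix of the paper): the map
`t ↦ ⟨β(t), R(t) e_c⟩` has derivative
`-(1/d)·⟨(I - ββᵀ) R e_c, v⟩ + ⟨β, R (ω × e_c)⟩`. -/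
theorem stmt_17 (q e_c v ω : EuclideanSpace ℝ (Fin 3))
    (p : ℝ → EuclideanSpace ℝ (Fin 3)) (R : ℝ → Matrix (Fin 3) (Fin 3) ℝ) (t₀ : ℝ)
    (hp : HasDerivAt p v t₀) (hR : HasDerivAt R (R t₀ * hatMap ω) t₀)
    (hq : q ≠ p t₀)
    (d : ℝ) (hd : d = ‖q - p t₀‖)
    (β : EuclideanSpace ℝ (Fin 3)) (hβ : β = d⁻¹ • (q - p t₀)) :
    HasDerivAt (fun t : ℝ => ⟪‖q - p t‖⁻¹ • (q - p t), mulE (R t) e_c⟫)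
      (-(d⁻¹) * ⟪mulE (R t₀) e_c - ⟪β, mulE (R t₀) e_c⟫ • β, v⟫
        + ⟪β, mulE (R t₀) (crossE ω e_c)⟫) t₀ := by
  have hq' : q - p t₀ ≠ 0 := sub_ne_zero.mpr hq
  have hnne : ‖q - p t₀‖ ≠ 0 := norm_ne_zero_iff.mpr hq'
  have hu : HasDerivAt (fun t => q - p t) (-v) t₀ := hp.const_sub q
  have hw : HasDerivAt (fun t => mulE (R t) e_c) (mulE (R t₀ * hatMap ω) e_c) t₀ := by
    have h := ((mulEL e_c).toContinuousLinearMap.hasFDerivAt (x := R t₀)).comp_hasDerivAt t₀ hR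
    exact h
  have hsq : HasDerivAt (fun t => ⟪q - p t, q - p t⟫)
      (⟪q - p t₀, -v⟫ + ⟪-v, q - p t₀⟫) t₀ := hu.inner ℝ hu
  have hpos : (0:ℝ) < ⟪q - p t₀, q - p t₀⟫ := by
    rw [real_inner_self_eq_norm_mul_norm]
    exact mul_pos (norm_pos_iff.mpr hq') (norm_pos_iff.mpr hq')
  have hsqrt := (Real.hasDerivAt_sqrt (ne_of_gt hpos)).comp t₀ hsq
  have hsqrt_eq : ∀ x : EuclideanSpace ℝ (Fin 3), Real.sqrt ⟪x, x⟫ = ‖x‖ := fun x => by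
    rw [real_inner_self_eq_norm_mul_norm, Real.sqrt_mul_self (norm_nonneg _)]
  simp only [Function.comp_def, hsqrt_eq] at hsqrt
  have hinv := hsqrt.inv hnne
  have hg : HasDerivAt (fun t => ⟪q - p t, mulE (R t) e_c⟫)
      (⟪q - p t₀, mulE (R t₀ * hatMap ω) e_c⟫ + ⟪-v, mulE (R t₀) e_c⟫) t₀ := hu.inner ℝ hw
  have htot := hinv.mul hg
  have hfun : (fun t : ℝ => ⟪‖q - p t‖⁻¹ • (q - p t), mulE (R t) e_c⟫)
      = fun t => (‖q - p t‖)⁻¹ * ⟪q - p t, mulE (R t) e_c⟫ := by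
    funext t; rw [real_inner_smul_left]
  rw [hfun]
  convert htot using 1
  any_goals rfl
  simp only [Pi.inv_apply]
  rw [mulE_mul, mulE_hat]
  subst hβ hd
  set u := q - p t₀ with hu_def
  set w := mulE (R t₀) e_c with hw_def
  set w' := mulE (R t₀) (crossE ω e_c) with hw'_def
  simp only [inner_neg_left, inner_neg_right, inner_sub_left, real_inner_smul_left]
  rw [real_inner_comm v u, real_inner_comm w v]
  generalize ⟪u, v⟫ = a
  generalize ⟪u, w⟫ = b
  generalize ⟪v, w⟫ = c
  generalize ⟪u, w'⟫ = e
  field_simp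
  ring
end
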